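/- Let m be a nonnegative integer, k = 4m+3, and let t < n be nonnegative integers. Let x be a nonnegative integer less than 2^{n+1} with binary digits x_i and x_n = 1, and let y_i, z_i ∈ {0,1} for i = n, n−1, ..., n−t be given digits with x_i + y_i + z_i ≡ 0 (mod 2) for all such i, y_n = 0 and z_n = 1. Define s_j = Σ_{i=n−j}^{n} (x_i + z_i − k·y_i)·2^{i+j−n} for j = 0, 1, ..., t, and suppose 0 ≤ s_j < k for all j = 0, ..., t. Then there exist unique digits y_i, z_i ∈ {0,1} for i = n−t−1, n−t−2, ..., 0 such that the numbers y = Σ_{i=0}^{n} y_i·2^i and z = Σ_{i=0}^{n} z_i·2^i satisfy x ⊕ y ⊕ z = 0 and y = ⌊(x+z)/k⌋. -/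

import Mathlib

/-!
Read from the top, `s_j` is the residual `x' + z' - k y'` of the numbers `x', y', z'` formed by
the top `j + 1` digits of `x, y, z`. Hence `x ⊕ y ⊕ z = 0` and `y = ⌊(x + z) / k⌋` say exactly
that every digit triple has even sum and `0 ≤ s_n < k`. Even digit sums make every `s_j` even,
and by `s_{j+1} = 2 s_j + (x_i + z_i - k y_i)` an even `s_j` outside `[0, k)` keeps all later
ones outside, so every `s_j` lies in `[0, k)`. From an even `s_j ∈ [0, k)` the two possible
increments are `2 x_i` (`y_i = 0`) and `1 - k` (`y_i = 1`), and exactly one of them lands in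
`[0, k)`: both would force `x_i = 0` and `s_j = (k - 1) / 2`, which is odd because
`k ≡ 3 (mod 4)`. So the missing digits exist and are forced one at a time.
-/

/-- The i-th binary digit of x. -/
def bitd (x i : ℕ) : ℕ := x / 2 ^ i % 2

/-- The sequence s_j = Σ_{i=n−j}^{n} (x_i + z_i − k·y_i)·2^{i+j−n}, where the digits
y_i, z_i are given by the digit functions yd, zd. -/
def sgen' (k : ℤ) (n : ℕ) (x : ℕ) (yd zd : ℕ → ℕ) (j : ℕ) : ℤ :=
  ∑ i ∈ Finset.Icc (n - j) n,
    ((bitd x i : ℤ) + (zd i : ℤ) - k * (yd i : ℤ)) * 2 ^ (i + j - n)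

open Finset

lemma bitd_le_one (x i : ℕ) : bitd x i ≤ 1 :=
  Nat.lt_succ_iff.mp (Nat.mod_lt _ two_pos)

lemma bitd_eq_zero_of_lt {x i : ℕ} (h : x < 2 ^ i) : bitd x i = 0 := by
  rw [bitd, Nat.div_eq_of_lt h]

lemma bitd_eq_zero_of_lt_two_pow_succ {x n i : ℕ} (hx : x < 2 ^ (n + 1)) (hi : n < i) :
    bitd x i = 0 :=
  bitd_eq_zero_of_lt (hx.trans_le (Nat.pow_le_pow_right two_pos hi))

lemma bitd_eq_toNat_testBit (x i : ℕ) : bitd x i = (x.testBit i).toNat := by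
  rw [Nat.testBit_eq_decide_div_mod_eq, bitd]
  rcases Nat.mod_two_eq_zero_or_one (x / 2 ^ i) with h | h <;> simp [h]

lemma xor_xor_eq_zero_iff_bitd (x y z : ℕ) :
    x ^^^ y ^^^ z = 0 ↔ ∀ i, (bitd x i + bitd y i + bitd z i) % 2 = 0 := by
  have key : ∀ a b c : Bool, (a ^^ b ^^ c) = false ↔ (a.toNat + b.toNat + c.toNat) % 2 = 0 := by
    decide
  simp only [bitd_eq_toNat_testBit, ← key, ← Nat.testBit_xor]
  exact ⟨fun h i => by simp [h], fun h => Nat.eq_of_testBit_eq (by simpa using h)⟩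

lemma bitd_add_two_mul_zero {b : ℕ} (hb : b ≤ 1) (a : ℕ) : bitd (b + 2 * a) 0 = b := by
  simp only [bitd, pow_zero, Nat.div_one]
  omega

lemma bitd_add_two_mul_succ {b : ℕ} (hb : b ≤ 1) (a j : ℕ) :
    bitd (b + 2 * a) (j + 1) = bitd a j := by
  rw [bitd, bitd, pow_succ', ← Nat.div_div_eq_div_mul, show (b + 2 * a) / 2 = a by omega]

lemma exists_lt_two_pow_bitd_eq (N : ℕ) (f : ℕ → ℕ) (hf : ∀ i < N, f i ≤ 1) :
    ∃ a < 2 ^ N, ∀ i < N, bitd a i = f i := by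
  induction N generalizing f with
  | zero => exact ⟨0, by simp, by simp⟩
  | succ N ih =>
    obtain ⟨a, ha, hbits⟩ := ih (fun i => f (i + 1)) fun i hi => hf (i + 1) (by omega)
    refine ⟨f 0 + 2 * a, by have := hf 0 (by omega); rw [pow_succ']; omega, ?_⟩
    rintro (_ | i) hi
    · exact bitd_add_two_mul_zero (hf 0 (by omega)) a
    · rw [bitd_add_two_mul_succ (hf 0 (by omega)), hbits i (by omega)]

lemma eq_of_bitd_eq {a b N : ℕ} (ha : a < 2 ^ N) (hb : b < 2 ^ N)
    (h : ∀ i < N, bitd a i = bitd b i) : a = b := by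
  refine Nat.eq_of_testBit_eq fun i => ?_
  have : bitd a i = bitd b i := by
    rcases lt_or_ge i N with hi | hi
    · exact h i hi
    · have hN := Nat.pow_le_pow_right two_pos hi
      rw [bitd_eq_zero_of_lt (ha.trans_le hN), bitd_eq_zero_of_lt (hb.trans_le hN)]
  rw [Nat.testBit_eq_decide_div_mod_eq, Nat.testBit_eq_decide_div_mod_eq]
  exact congrArg (decide <| · = 1) this

section Residual

variable {k : ℤ} {n x : ℕ} {Y Z : ℕ → ℕ}

lemma sgen'_zero : sgen' k n x Y Z 0 = bitd x n + Z n - k * Y n := by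
  simp [sgen']

lemma sgen'_succ {j : ℕ} (hj : j < n) :
    sgen' k n x Y Z (j + 1) = 2 * sgen' k n x Y Z j +
      (bitd x (n - (j + 1)) + Z (n - (j + 1)) - k * Y (n - (j + 1))) := by
  have hIcc : Icc (n - (j + 1)) n = insert (n - (j + 1)) (Icc (n - j) n) := by
    ext i
    simp only [mem_Icc, mem_insert]
    omega
  rw [sgen', sgen', hIcc, sum_insert (by simp only [mem_Icc]; omega), mul_sum, add_comm,
    show n - (j + 1) + (j + 1) - n = 0 by omega, pow_zero, mul_one]
  congr 1
  refine sum_congr rfl fun i hi => ?_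
  rw [show i + (j + 1) - n = i + j - n + 1 by simp only [mem_Icc] at hi; omega, pow_succ]
  ring

lemma sgen'_congr {Y' Z' : ℕ → ℕ} {j : ℕ}
    (h : ∀ i, n - j ≤ i → i ≤ n → Y i = Y' i ∧ Z i = Z' i) :
    sgen' k n x Y Z j = sgen' k n x Y' Z' j := by
  refine sum_congr rfl fun i hi => ?_
  obtain ⟨hY, hZ⟩ := h i (mem_Icc.1 hi).1 (mem_Icc.1 hi).2
  rw [hY, hZ]

lemma sgen'_even (hk : k % 2 = 1) {j : ℕ}
    (hpar : ∀ i, n - j ≤ i → i ≤ n → (bitd x i + Y i + Z i) % 2 = 0) :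
    Even (sgen' k n x Y Z j) := by
  refine even_sum _ fun i hi => Even.mul_right ?_ _
  obtain ⟨r, hr⟩ : ∃ r, k = 2 * r + 1 := ⟨k / 2, by omega⟩
  have hsplit :
      (bitd x i : ℤ) + Z i - k * Y i = (bitd x i + Y i + Z i : ℕ) - 2 * ((r + 1) * Y i) := by
    rw [hr]
    push_cast
    ring
  have := hpar i (mem_Icc.1 hi).1 (mem_Icc.1 hi).2
  rw [hsplit, Int.even_iff]
  omega

end Residual

def IsNimZeroDigits (xb yb zb : ℕ) : Prop :=
  yb ≤ 1 ∧ zb ≤ 1 ∧ (xb + yb + zb) % 2 = 0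

lemma exists_isNimZeroDigits_step {k : ℕ} (hk : k % 2 = 1) {s : ℤ} (hs : Even s)
    (hsk : s ∈ Set.Ico 0 (k : ℤ)) {xb : ℕ} (hxb : xb ≤ 1) :
    ∃ yb zb, IsNimZeroDigits xb yb zb ∧ 2 * s + (xb + zb - k * yb) ∈ Set.Ico 0 (k : ℤ) := by
  obtain ⟨r, rfl⟩ := hs
  rw [Set.mem_Ico] at hsk
  by_cases h : 2 * (r + r) + 2 * xb < k
  · exact ⟨0, xb, ⟨by omega, hxb, by omega⟩, Set.mem_Ico.2 ⟨by omega, by omega⟩⟩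
  · exact ⟨1, 1 - xb, ⟨le_rfl, by omega, by omega⟩, Set.mem_Ico.2 ⟨by omega, by omega⟩⟩

lemma IsNimZeroDigits.eq_of_step {k : ℕ} (hk : k % 4 = 3) {s : ℤ} (hs : Even s)
    {xb y z y' z' : ℕ} (hxb : xb ≤ 1) (hd : IsNimZeroDigits xb y z)
    (hd' : IsNimZeroDigits xb y' z')
    (h : 2 * s + (xb + z - k * y) ∈ Set.Ico 0 (k : ℤ))
    (h' : 2 * s + (xb + z' - k * y') ∈ Set.Ico 0 (k : ℤ)) :
    y = y' ∧ z = z' := by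
  obtain ⟨hy, hz, hp⟩ := hd
  obtain ⟨hy', hz', hp'⟩ := hd'
  obtain ⟨r, rfl⟩ := hs
  rw [Set.mem_Ico] at h h'
  interval_cases y <;> interval_cases y' <;> push_cast at h h' <;> omega

lemma IsNimZeroDigits.mem_Ico_of_step {k : ℕ} {s : ℤ} (hs : Even s) {xb yb zb : ℕ}
    (hxb : xb ≤ 1) (hd : IsNimZeroDigits xb yb zb)
    (h : 2 * s + (xb + zb - k * yb) ∈ Set.Ico 0 (k : ℤ)) :
    s ∈ Set.Ico 0 (k : ℤ) := by
  obtain ⟨hy, hz, -⟩ := hd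
  obtain ⟨r, rfl⟩ := hs
  rw [Set.mem_Ico] at h ⊢
  interval_cases yb <;> push_cast at h <;> omega

def IsAdmissible (k n x : ℕ) (Y Z : ℕ → ℕ) (j : ℕ) : Prop :=
  (∀ i, n - j ≤ i → i ≤ n → IsNimZeroDigits (bitd x i) (Y i) (Z i)) ∧
    ∀ j' ≤ j, sgen' k n x Y Z j' ∈ Set.Ico 0 (k : ℤ)

namespace IsAdmissible

variable {k n x : ℕ} {Y Z Y' Z' : ℕ → ℕ} {j : ℕ}

lemma even (hk : k % 2 = 1) (h : IsAdmissible k n x Y Z j) : Even (sgen' k n x Y Z j) :=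
  sgen'_even (by omega) fun i h₁ h₂ => (h.1 i h₁ h₂).2.2

lemma mono (h : IsAdmissible k n x Y Z j) {j' : ℕ} (hj : j' ≤ j) :
    IsAdmissible k n x Y Z j' :=
  ⟨fun i h₁ h₂ => h.1 i (by omega) h₂, fun j'' hj'' => h.2 j'' (hj''.trans hj)⟩

lemma congr (h : IsAdmissible k n x Y Z j)
    (hYZ : ∀ i, n - j ≤ i → i ≤ n → Y i = Y' i ∧ Z i = Z' i) :
    IsAdmissible k n x Y' Z' j := by
  refine ⟨fun i h₁ h₂ => ?_, fun j' hj' => ?_⟩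
  · rw [← (hYZ i h₁ h₂).1, ← (hYZ i h₁ h₂).2]
    exact h.1 i h₁ h₂
  · rw [← sgen'_congr fun i h₁ h₂ => hYZ i (by omega) h₂]
    exact h.2 j' hj'

lemma exists_succ (hk : k % 2 = 1) (h : IsAdmissible k n x Y Z j) (hj : j < n) :
    ∃ Y' Z', (∀ i, i ≠ n - (j + 1) → Y' i = Y i ∧ Z' i = Z i) ∧
      IsAdmissible k n x Y' Z' (j + 1) := by
  obtain ⟨yb, zb, hd, hs⟩ :=
    exists_isNimZeroDigits_step hk (h.even hk) (h.2 j le_rfl) (bitd_le_one x (n - (j + 1)))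
  set Y' := Function.update Y (n - (j + 1)) yb
  set Z' := Function.update Z (n - (j + 1)) zb
  have hYZ : ∀ i, i ≠ n - (j + 1) → Y' i = Y i ∧ Z' i = Z i := fun i hi =>
    ⟨Function.update_of_ne hi _ _, Function.update_of_ne hi _ _⟩
  have hold : IsAdmissible k n x Y' Z' j :=
    h.congr fun i h₁ _ => And.imp Eq.symm Eq.symm (hYZ i (by omega))
  refine ⟨Y', Z', hYZ, fun i h₁ h₂ => ?_, fun j' hj' => ?_⟩
  · rcases eq_or_ne i (n - (j + 1)) with rfl | hi
    · simpa [Y', Z'] using hd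
    · exact hold.1 i (by omega) h₂
  · rcases Nat.of_le_succ hj' with hj' | rfl
    · exact hold.2 j' hj'
    · rw [sgen'_succ hj, sgen'_congr fun i h₁ _ => hYZ i (by omega)]
      simpa [Y', Z'] using hs

lemma exists_extend (hk : k % 2 = 1) (h : IsAdmissible k n x Y Z j) :
    ∃ Y' Z', (∀ i, n - j ≤ i → Y' i = Y i ∧ Z' i = Z i) ∧ IsAdmissible k n x Y' Z' n := by
  rcases le_or_gt n j with hnj | hjn
  · exact ⟨Y, Z, fun _ _ => ⟨rfl, rfl⟩, h.mono hnj⟩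
  suffices ∀ j', j ≤ j' → j' ≤ n → ∃ Y' Z', (∀ i, n - j ≤ i → Y' i = Y i ∧ Z' i = Z i) ∧
      IsAdmissible k n x Y' Z' j' from this n hjn.le le_rfl
  intro j' hjj'
  induction j', hjj' using Nat.le_induction with
  | base => exact fun _ => ⟨Y, Z, fun _ _ => ⟨rfl, rfl⟩, h⟩
  | succ j' hjj' ih =>
    intro hj'n
    obtain ⟨Y₁, Z₁, hagree₁, h₁⟩ := ih (by omega)
    obtain ⟨Y₂, Z₂, hagree₂, h₂⟩ := h₁.exists_succ hk (by omega)
    refine ⟨Y₂, Z₂, fun i hi => ?_, h₂⟩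
    obtain ⟨hY₂, hZ₂⟩ := hagree₂ i (by omega)
    rw [hY₂, hZ₂]
    exact hagree₁ i hi

lemma digits_eq (hk : k % 4 = 3) (h : IsAdmissible k n x Y Z j)
    (h' : IsAdmissible k n x Y' Z' j) (hj : j ≤ n) :
    ∀ i, n - j ≤ i → i ≤ n → Y i = Y' i ∧ Z i = Z' i := by
  induction j with
  | zero =>
    intro i h₁ h₂
    obtain rfl : i = n := by omega
    refine (h.1 i h₁ h₂).eq_of_step hk Even.zero (bitd_le_one x i) (h'.1 i h₁ h₂) ?_ ?_
    · rw [mul_zero, zero_add, ← sgen'_zero]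
      exact h.2 0 le_rfl
    · rw [mul_zero, zero_add, ← sgen'_zero]
      exact h'.2 0 le_rfl
  | succ j ih =>
    have hprev := ih (h.mono j.le_succ) (h'.mono j.le_succ) (by omega)
    intro i h₁ h₂
    rcases eq_or_ne i (n - (j + 1)) with rfl | hi
    · refine (h.1 _ h₁ h₂).eq_of_step hk ((h.mono j.le_succ).even (by omega))
        (bitd_le_one x _) (h'.1 _ h₁ h₂) ?_ ?_
      · rw [← sgen'_succ (by omega)]
        exact h.2 (j + 1) le_rfl
      · rw [sgen'_congr hprev, ← sgen'_succ (by omega)]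
        exact h'.2 (j + 1) le_rfl
    · exact hprev i (by omega) h₂

lemma of_sgen'_mem_Ico (hk : k % 2 = 1)
    (hd : ∀ i ≤ n, IsNimZeroDigits (bitd x i) (Y i) (Z i))
    (hn : sgen' k n x Y Z n ∈ Set.Ico 0 (k : ℤ)) : IsAdmissible k n x Y Z n := by
  refine ⟨fun i _ h₂ => hd i h₂, fun j hj => ?_⟩
  induction hj using Nat.decreasingInduction with
  | self => exact hn
  | of_succ j hj ih =>
    rw [sgen'_succ hj] at ih
    exact (hd _ (by omega)).mem_Ico_of_step
      (sgen'_even (by omega) fun i _ h₂ => (hd i h₂).2.2) (bitd_le_one x _) ih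

end IsAdmissible

lemma div_two_pow_eq_two_mul_add_bitd (a i : ℕ) :
    a / 2 ^ i = 2 * (a / 2 ^ (i + 1)) + bitd a i := by
  rw [bitd, pow_succ, ← Nat.div_div_eq_div_mul]
  omega

lemma bitd_eq_div_of_lt_two_pow_succ {a n : ℕ} (ha : a < 2 ^ (n + 1)) :
    bitd a n = a / 2 ^ n := by
  have : a / 2 ^ n < 2 := Nat.div_lt_of_lt_mul (by rwa [← pow_succ])
  rw [bitd, Nat.mod_eq_of_lt this]

lemma sgen'_bitd {k : ℤ} {n x y z : ℕ} (hx : x < 2 ^ (n + 1)) (hy : y < 2 ^ (n + 1))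
    (hz : z < 2 ^ (n + 1)) {j : ℕ} (hj : j ≤ n) :
    sgen' k n x (bitd y) (bitd z) j =
      (x / 2 ^ (n - j) : ℕ) + (z / 2 ^ (n - j) : ℕ) - k * (y / 2 ^ (n - j) : ℕ) := by
  induction j with
  | zero =>
    rw [sgen'_zero, Nat.sub_zero, bitd_eq_div_of_lt_two_pow_succ hx,
      bitd_eq_div_of_lt_two_pow_succ hy, bitd_eq_div_of_lt_two_pow_succ hz]
  | succ j ih =>
    rw [sgen'_succ hj, ih (by omega), show n - j = n - (j + 1) + 1 by omega,
      div_two_pow_eq_two_mul_add_bitd x (n - (j + 1)),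
      div_two_pow_eq_two_mul_add_bitd y (n - (j + 1)),
      div_two_pow_eq_two_mul_add_bitd z (n - (j + 1))]
    push_cast
    ring

lemma isAdmissible_bitd_iff {k n x y z : ℕ} (hk : k % 2 = 1) (hx : x < 2 ^ (n + 1))
    (hy : y < 2 ^ (n + 1)) (hz : z < 2 ^ (n + 1)) :
    IsAdmissible k n x (bitd y) (bitd z) n ↔ x ^^^ y ^^^ z = 0 ∧ y = (x + z) / k := by
  have hres : sgen' k n x (bitd y) (bitd z) n = x + z - k * y := by
    simp [sgen'_bitd hx hy hz le_rfl]
  constructor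
  · rintro ⟨hd, hs⟩
    refine ⟨(xor_xor_eq_zero_iff_bitd x y z).2 fun i => ?_, ?_⟩
    · rcases le_or_gt i n with hi | hi
      · exact (hd i (by omega) hi).2.2
      · simp [bitd_eq_zero_of_lt_two_pow_succ hx hi, bitd_eq_zero_of_lt_two_pow_succ hy hi,
          bitd_eq_zero_of_lt_two_pow_succ hz hi]
    · have := hs n le_rfl
      rw [hres, Set.mem_Ico] at this
      exact (Nat.div_eq_of_lt_le (by zify; linarith) (by zify; linarith)).symm
  · rintro ⟨hxor, hdiv⟩
    refine IsAdmissible.of_sgen'_mem_Ico hk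
      (fun i _ => ⟨bitd_le_one y i, bitd_le_one z i, (xor_xor_eq_zero_iff_bitd x y z).1 hxor i⟩) ?_
    have hdivmod : (k : ℤ) * y + ((x + z) % k : ℕ) = x + z := by
      rw [hdiv]
      exact_mod_cast Nat.div_add_mod (x + z) k
    have hmod : ((x + z) % k : ℕ) < (k : ℤ) := by exact_mod_cast Nat.mod_lt _ (by omega)
    rw [hres, Set.mem_Ico]
    constructor <;> linarith [Int.natCast_nonneg ((x + z) % k)]

theorem stmt9_general (m k t n : ℕ) (hk : k = 4 * m + 3)
    (x : ℕ) (hx : x < 2 ^ (n + 1))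
    (yd zd : ℕ → ℕ)
    (hyd : ∀ i, n - t ≤ i → i ≤ n → yd i ≤ 1)
    (hzd : ∀ i, n - t ≤ i → i ≤ n → zd i ≤ 1)
    (hpar : ∀ i, n - t ≤ i → i ≤ n → (bitd x i + yd i + zd i) % 2 = 0)
    (hs : ∀ j ≤ t, 0 ≤ sgen' (k : ℤ) n x yd zd j ∧ sgen' (k : ℤ) n x yd zd j < k) :
    ∃! yz : ℕ × ℕ,
      yz.1 < 2 ^ (n + 1) ∧ yz.2 < 2 ^ (n + 1) ∧
      (∀ i, n - t ≤ i → i ≤ n → bitd yz.1 i = yd i ∧ bitd yz.2 i = zd i) ∧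
      x ^^^ yz.1 ^^^ yz.2 = 0 ∧ yz.1 = (x + yz.2) / k := by
  have hk₂ : k % 2 = 1 := by omega
  have htop : IsAdmissible k n x yd zd t :=
    ⟨fun i h₁ h₂ => ⟨hyd i h₁ h₂, hzd i h₁ h₂, hpar i h₁ h₂⟩, hs⟩
  obtain ⟨Y, Z, hagree, hadm⟩ := htop.exists_extend hk₂
  obtain ⟨y, hy, hYy⟩ :=
    exists_lt_two_pow_bitd_eq (n + 1) Y fun i hi => (hadm.1 i (by omega) (by omega)).1
  obtain ⟨z, hz, hZz⟩ :=
    exists_lt_two_pow_bitd_eq (n + 1) Z fun i hi => (hadm.1 i (by omega) (by omega)).2.1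
  have hsol : IsAdmissible k n x (bitd y) (bitd z) n :=
    hadm.congr fun i _ hi => ⟨(hYy i (by omega)).symm, (hZz i (by omega)).symm⟩
  refine ⟨(y, z), ⟨hy, hz, fun i h₁ h₂ => ?_, (isAdmissible_bitd_iff hk₂ hx hy hz).1 hsol⟩, ?_⟩
  · rw [hYy i (by omega), hZz i (by omega)]
    exact hagree i h₁
  · rintro ⟨y', z'⟩ ⟨hy', hz', -, hsol'⟩
    have hsame :=
      ((isAdmissible_bitd_iff hk₂ hx hy' hz').2 hsol').digits_eq (by omega) hsol le_rfl
    exact Prod.ext (eq_of_bitd_eq hy' hy fun i hi => (hsame i (by omega) (by omega)).1)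
      (eq_of_bitd_eq hz' hz fun i hi => (hsame i (by omega) (by omega)).2)

theorem stmt9 (m k t n : ℕ) (hk : k = 4 * m + 3) (htn : t < n)
    (x : ℕ) (hx : x < 2 ^ (n + 1)) (hxn : bitd x n = 1)
    (yd zd : ℕ → ℕ)
    (hyd : ∀ i, n - t ≤ i → i ≤ n → yd i ≤ 1)
    (hzd : ∀ i, n - t ≤ i → i ≤ n → zd i ≤ 1)
    (hpar : ∀ i, n - t ≤ i → i ≤ n → (bitd x i + yd i + zd i) % 2 = 0)
    (hyn : yd n = 0) (hzn : zd n = 1)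
    (hs : ∀ j ≤ t, 0 ≤ sgen' (k : ℤ) n x yd zd j ∧ sgen' (k : ℤ) n x yd zd j < k) :
    ∃! yz : ℕ × ℕ,
      yz.1 < 2 ^ (n + 1) ∧ yz.2 < 2 ^ (n + 1) ∧
      (∀ i, n - t ≤ i → i ≤ n → bitd yz.1 i = yd i ∧ bitd yz.2 i = zd i) ∧
      x ^^^ yz.1 ^^^ yz.2 = 0 ∧ yz.1 = (x + yz.2) / k :=
  stmt9_general m k t n hk x hx yd zd hyd hzd hpar hs
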